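/- Let η : ℝ → ℝ be a Schwartz function with ∫ η(z) dz = 1, and let f₁, f₂ : ℝ → ℝ be continuous compactly supported functions with mollified embeddings f_{i,ε}(x) := ∫ η(z) f_i(x + εz) dz. Then for every continuous compactly supported T : ℝ → ℝ, lim_{ε → 0⁺} ∫ f_{1,ε}(x) f_{2,ε}(x) T(x) dx = ∫ f₁(x) f₂(x) T(x) dx; that is, the product of the embeddings of two continuous functions is associated to the embedding of their pointwise product. -/

import Mathlib

/-!
Writing `f(x) = ∫ η(z) f(x) dz` (as `∫ η = 1`), the mollification `f_ε(x)` tends to `f(x)` by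
dominated convergence with dominant `|η| · sup |f|`, for every `x` and already as `ε → 0`.
The same dominant bounds `|f_ε| ≤ ‖η‖₁ sup |f|` uniformly in `ε`, so `f_{1,ε} f_{2,ε} T` is
dominated by a multiple of `|T|` and a second dominated convergence gives the theorem.
-/

open MeasureTheory Filter Topology

noncomputable def mollify (η f : ℝ → ℝ) (ε x : ℝ) : ℝ :=
  ∫ z, η z * f (x + ε * z)

section Mollify

variable {η f : ℝ → ℝ} {C : ℝ}

lemma norm_mollify_integrand_le (hC : ∀ x, ‖f x‖ ≤ C) (ε x z : ℝ) :
    ‖η z * f (x + ε * z)‖ ≤ ‖η z‖ * C := by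
  rw [norm_mul]
  exact mul_le_mul_of_nonneg_left (hC _) (norm_nonneg _)

lemma norm_mollify_le (hη : Integrable η) (hC : ∀ x, ‖f x‖ ≤ C) (ε x : ℝ) :
    ‖mollify η f ε x‖ ≤ (∫ z, ‖η z‖) * C :=
  calc ‖mollify η f ε x‖ ≤ ∫ z, ‖η z * f (x + ε * z)‖ := norm_integral_le_integral_norm _
    _ ≤ ∫ z, ‖η z‖ * C :=
        integral_mono_of_nonneg (.of_forall fun _ => norm_nonneg _) (hη.norm.mul_const C)
          (.of_forall (norm_mollify_integrand_le hC ε x))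
    _ = (∫ z, ‖η z‖) * C := integral_mul_const _ _

lemma continuous_mollify (hη : Integrable η) (hf : Continuous f) (hC : ∀ x, ‖f x‖ ≤ C)
    (ε : ℝ) : Continuous (mollify η f ε) :=
  continuous_of_dominated
    (fun x => hη.aestronglyMeasurable.mul (hf.comp (by fun_prop)).aestronglyMeasurable)
    (fun x => .of_forall (norm_mollify_integrand_le hC ε x)) (hη.norm.mul_const C)
    (.of_forall fun z => continuous_const.mul (hf.comp (by fun_prop)))

lemma tendsto_mollify (hη : Integrable η) (hη₁ : ∫ z, η z = 1) (hf : Continuous f)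
    (hC : ∀ x, ‖f x‖ ≤ C) (x : ℝ) :
    Tendsto (fun ε => mollify η f ε x) (𝓝 0) (𝓝 (f x)) := by
  have hfx : f x = ∫ z, η z * f x := by rw [integral_mul_const, hη₁, one_mul]
  rw [hfx]
  refine tendsto_integral_filter_of_dominated_convergence (fun z => ‖η z‖ * C)
    (.of_forall fun ε =>
      hη.aestronglyMeasurable.mul (hf.comp (by fun_prop)).aestronglyMeasurable)
    (.of_forall fun ε => .of_forall (norm_mollify_integrand_le hC ε x)) (hη.norm.mul_const C)
    (.of_forall fun z => ?_)
  have hcont : Continuous fun ε : ℝ => η z * f (x + ε * z) :=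
    continuous_const.mul (hf.comp (by fun_prop))
  simpa using hcont.tendsto 0

end Mollify

/-- For a Schwartz mollifier `η` with `∫ η = 1` and continuous compactly
supported `f₁`, `f₂`, the product of the mollified embeddings of `f₁` and `f₂`
is associated to the pointwise product `f₁·f₂`: for every continuous compactly
supported `T`, `∫ f_{1,ε} f_{2,ε} T → ∫ f₁ f₂ T` as `ε → 0⁺`. -/
theorem product_embeddings_associated (η : SchwartzMap ℝ ℝ)
    (hη : ∫ z, η z = 1)
    (f₁ f₂ : ℝ → ℝ) (hf₁ : Continuous f₁) (hf₁c : HasCompactSupport f₁)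
    (hf₂ : Continuous f₂) (hf₂c : HasCompactSupport f₂)
    (T : ℝ → ℝ) (hT : Continuous T) (hTc : HasCompactSupport T) :
    Tendsto
      (fun ε : ℝ => ∫ x,
        (∫ z, η z * f₁ (x + ε * z)) * (∫ z, η z * f₂ (x + ε * z)) * T x)
      (nhdsWithin 0 (Set.Ioi 0)) (nhds (∫ x, f₁ x * f₂ x * T x)) := by
  obtain ⟨C₁, hC₁⟩ := hf₁c.exists_bound_of_continuous hf₁
  obtain ⟨C₂, hC₂⟩ := hf₂c.exists_bound_of_continuous hf₂
  have hb₁ := norm_mollify_le η.integrable hC₁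
  have hb₂ := norm_mollify_le η.integrable hC₂
  set I := ∫ z, ‖η z‖
  refine tendsto_integral_filter_of_dominated_convergence (fun x => I * C₁ * (I * C₂) * ‖T x‖)
    (.of_forall fun ε => (((continuous_mollify η.integrable hf₁ hC₁ ε).mul
      (continuous_mollify η.integrable hf₂ hC₂ ε)).mul hT).aestronglyMeasurable)
    (.of_forall fun ε => .of_forall fun x => ?_)
    ((hT.integrable_of_hasCompactSupport hTc).norm.const_mul _)
    (.of_forall fun x => ?_)
  · rw [norm_mul, norm_mul]
    gcongr
    · exact (norm_nonneg _).trans (hb₁ ε x)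
    · exact hb₁ ε x
    · exact hb₂ ε x
  · exact (((tendsto_mollify η.integrable hη hf₁ hC₁ x).mul
      (tendsto_mollify η.integrable hη hf₂ hC₂ x)).mul tendsto_const_nhds).mono_left
      nhdsWithin_le_nhds
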